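/- Let P^e denote the set of all probability measures on a finite set Ω with full support. Then for every random variable D and every finite σ-algebra F_t generated by a partition {P^t_1,...,P^t_{n_t}} of Ω: inf_{Q ∈ P^e} E_Q[D | F_t] = Σ_i 1_{P^t_i} · min_{ω ∈ P^t_i} D(ω). Consequently, P^e is a consistent set of probability measures: inf_{Q∈P^e} E_Q[D|F_t] = inf_{Q∈P^e} E_Q[ inf_{M∈P^e} E_M[D|F_{t+1}] | F_t ] for all t. -/

import Mathlib

open MeasureTheory
open scoped BigOperators ENNReal

/-- A probability mass function on the finite set `Ω`. -/
def IsProb {Ω : Type*} [Fintype Ω] (Q : Ω → ℝ) : Prop :=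
  (∀ ω, 0 ≤ Q ω) ∧ ∑ ω, Q ω = 1

/-- Full support (equivalence with a full-support reference measure). -/
def FullSupport {Ω : Type*} (Q : Ω → ℝ) : Prop := ∀ ω, 0 < Q ω

/-- The atom of the σ-algebra `𝒢` containing `ω`. -/
def atomOf {Ω : Type*} (𝒢 : MeasurableSpace Ω) (ω : Ω) : Set Ω :=
  ⋂₀ {A : Set Ω | MeasurableSet[𝒢] A ∧ ω ∈ A}

/-- Conditional expectation of `X` under `Q` given the σ-algebra `𝒢`, computed
pointwise on atoms (finite state space). -/
noncomputable def condExpOn {Ω : Type*} [Fintype Ω] (Q : Ω → ℝ)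
    (𝒢 : MeasurableSpace Ω) (X : Ω → ℝ) (ω : Ω) : ℝ :=
  (∑ ω', (atomOf 𝒢 ω).indicator (fun u => Q u * X u) ω') /
    (∑ ω', (atomOf 𝒢 ω).indicator Q ω')

/-- `inf_{Q ∈ 𝒬} E_Q[X | 𝒢]`, pointwise in `ω`. -/
noncomputable def infCE {Ω : Type*} [Fintype Ω] (𝒬 : Set (Ω → ℝ))
    (𝒢 : MeasurableSpace Ω) (X : Ω → ℝ) (ω : Ω) : ℝ :=
  sInf ((fun Q => condExpOn Q 𝒢 X ω) '' 𝒬)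

/-- A set of probability measures is consistent w.r.t. the filtration `F`. -/
def IsConsistent {Ω : Type*} [Fintype Ω] (T : ℕ) (F : ℕ → MeasurableSpace Ω)
    (𝒬 : Set (Ω → ℝ)) : Prop :=
  ∀ t, t < T → ∀ X : Ω → ℝ, ∀ ω : Ω,
    infCE 𝒬 (F t) X ω = infCE 𝒬 (F t) (infCE 𝒬 (F (t + 1)) X) ω

/-- A sequence of sets of probability measures is dynamically consistent
w.r.t. the filtration `F`. -/
def DynConsistent {Ω : Type*} [Fintype Ω] (T : ℕ) (F : ℕ → MeasurableSpace Ω)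
    (𝒬 : ℕ → Set (Ω → ℝ)) : Prop :=
  ∀ t, t < T → ∀ A : Set Ω, MeasurableSet[F t] A → A.Nonempty →
    ∀ X : Ω → ℝ, ∀ ω ∈ A,
      (⨅ ω' : A, infCE (𝒬 (t + 1)) (F (t + 1)) X (ω' : Ω)) ≤ infCE (𝒬 t) (F t) X ω ∧
      infCE (𝒬 t) (F t) X ω ≤ ⨆ ω' : A, infCE (𝒬 (t + 1)) (F (t + 1)) X (ω' : Ω)

/-- The set `P^e` of all full-support probability measures on `Ω`. -/
def fullSupportProbs (Ω : Type*) [Fintype Ω] : Set (Ω → ℝ) :=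
  {Q | IsProb Q ∧ FullSupport Q}

/-! On an atom `A`, a full-support conditional expectation is an average of `D` with positive
weights, hence at least `min_A D`. Conversely, if `u₀` minimises `D` on `A`, the full-support
measures `(1 - ε) δ_{u₀} + ε · uniform` have conditional expectations tending to `D u₀` as
`ε → 0`, since `Q ↦ E_Q[D | 𝒢](ω)` is continuous wherever `Q` charges `A`. Consistency is then
the tower property of minima over nested atoms. -/

open Filter Topology

section Atoms

variable {Ω : Type*}

lemma mem_atomOf (𝒢 : MeasurableSpace Ω) (ω : Ω) : ω ∈ atomOf 𝒢 ω :=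
  Set.mem_sInter.2 fun _ hA => hA.2

lemma atomOf_subset_of_mem (𝒢 : MeasurableSpace Ω) {ω ω' : Ω} (h : ω' ∈ atomOf 𝒢 ω) :
    atomOf 𝒢 ω' ⊆ atomOf 𝒢 ω := fun _ hx =>
  Set.mem_sInter.2 fun A hA => Set.mem_sInter.1 hx A ⟨hA.1, Set.mem_sInter.1 h A hA⟩

lemma atomOf_anti {𝒢 𝒢' : MeasurableSpace Ω} (h : 𝒢 ≤ 𝒢') (ω : Ω) :
    atomOf 𝒢' ω ⊆ atomOf 𝒢 ω := fun _ hx =>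
  Set.mem_sInter.2 fun A hA => Set.mem_sInter.1 hx A ⟨h A hA.1, hA.2⟩

instance nonempty_atomOf (𝒢 : MeasurableSpace Ω) (ω : Ω) : Nonempty (atomOf 𝒢 ω) :=
  Set.Nonempty.to_subtype ⟨ω, mem_atomOf 𝒢 ω⟩

lemma iInf_atomOf_iInf_atomOf [Finite Ω] {𝒢 𝒢' : MeasurableSpace Ω} (h : 𝒢 ≤ 𝒢')
    (X : Ω → ℝ) (ω : Ω) :
    ⨅ u : atomOf 𝒢 ω, ⨅ v : atomOf 𝒢' u, X v = ⨅ u : atomOf 𝒢 ω, X u := by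
  have hsub (u : atomOf 𝒢 ω) : atomOf 𝒢' u ⊆ atomOf 𝒢 ω :=
    (atomOf_anti h u).trans (atomOf_subset_of_mem 𝒢 u.2)
  refine le_antisymm (ciInf_mono (Finite.bddBelow_range _) fun u => ?_)
    (le_ciInf fun u => le_ciInf fun v => ciInf_le (Finite.bddBelow_range _)
      (⟨v, hsub u v.2⟩ : atomOf 𝒢 ω))
  exact ciInf_le (Finite.bddBelow_range _) (⟨u, mem_atomOf 𝒢' u⟩ : atomOf 𝒢' u)

end Atoms

section CondExp

variable {Ω : Type*} [Fintype Ω] (𝒢 : MeasurableSpace Ω) (X : Ω → ℝ) (ω : Ω)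

lemma le_condExpOn {Q : Ω → ℝ} (hQ : ∀ u, 0 ≤ Q u)
    (hmass : 0 < ∑ u, (atomOf 𝒢 ω).indicator Q u) {m : ℝ} (hm : ∀ u ∈ atomOf 𝒢 ω, m ≤ X u) :
    m ≤ condExpOn Q 𝒢 X ω := by
  rw [condExpOn, le_div_iff₀ hmass, Finset.mul_sum]
  refine Finset.sum_le_sum fun u _ => ?_
  by_cases hu : u ∈ atomOf 𝒢 ω
  · simpa [hu, mul_comm] using mul_le_mul_of_nonneg_left (hm u hu) (hQ u)
  · simp [hu]

lemma FullSupport.sum_indicator_atomOf_pos {Q : Ω → ℝ} (hQ : FullSupport Q) :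
    0 < ∑ u, (atomOf 𝒢 ω).indicator Q u :=
  Finset.sum_pos' (fun u _ => Set.indicator_nonneg (fun u _ => (hQ u).le) u)
    ⟨ω, Finset.mem_univ _, by simpa [mem_atomOf] using hQ ω⟩

lemma sum_indicator_pi_single [DecidableEq Ω] {u₀ : Ω} (hu₀ : u₀ ∈ atomOf 𝒢 ω) (c : ℝ) :
    ∑ u, (atomOf 𝒢 ω).indicator (Pi.single u₀ c) u = c := by
  rw [Finset.sum_eq_single u₀ (fun u _ hu => by simp [hu]) (by simp), Set.indicator_of_mem hu₀,
    Pi.single_eq_same]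

lemma condExpOn_pi_single [DecidableEq Ω] {u₀ : Ω} (hu₀ : u₀ ∈ atomOf 𝒢 ω) :
    condExpOn (Pi.single u₀ 1) 𝒢 X ω = X u₀ := by
  have : (fun u => (Pi.single u₀ (1 : ℝ) : Ω → ℝ) u * X u) = Pi.single u₀ (X u₀) := by
    ext u; by_cases hu : u = u₀ <;> simp [hu]
  rw [condExpOn, this, sum_indicator_pi_single 𝒢 ω hu₀, sum_indicator_pi_single 𝒢 ω hu₀, div_one]

lemma continuousAt_condExpOn {Q : Ω → ℝ} (hmass : ∑ u, (atomOf 𝒢 ω).indicator Q u ≠ 0) :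
    ContinuousAt (fun Q => condExpOn Q 𝒢 X ω) Q := by
  have hind (f : (Ω → ℝ) → Ω → ℝ) (hf : ∀ u, Continuous fun Q => f Q u) (u : Ω) :
      Continuous fun Q => (atomOf 𝒢 ω).indicator (f Q) u := by
    by_cases hu : u ∈ atomOf 𝒢 ω
    · simpa [hu] using hf u
    · simpa [hu] using continuous_const
  unfold condExpOn
  refine ContinuousAt.div ?_ ?_ hmass <;> refine Continuous.continuousAt ?_ <;>
    refine continuous_finsetSum _ fun u _ => hind _ (fun u => ?_) u <;> fun_prop

end CondExp

section FullSupport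

variable {Ω : Type*} [Fintype Ω]

lemma isProb_pi_single [DecidableEq Ω] (u₀ : Ω) : IsProb (Pi.single u₀ (1 : ℝ)) :=
  ⟨fun u => by by_cases hu : u = u₀ <;> simp [hu], by simp⟩

lemma uniform_mem_fullSupportProbs [Nonempty Ω] :
    (fun _ => (Fintype.card Ω : ℝ)⁻¹) ∈ fullSupportProbs Ω :=
  ⟨⟨fun _ => by positivity, by simp⟩, fun _ => by positivity⟩

lemma IsProb.lineMap_mem_fullSupportProbs {Q P : Ω → ℝ} (hQ : IsProb Q)
    (hP : P ∈ fullSupportProbs Ω) {ε : ℝ} (hε : ε ∈ Set.Ioc 0 1) :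
    (fun u => (1 - ε) * Q u + ε * P u) ∈ fullSupportProbs Ω := by
  obtain ⟨⟨-, hPsum⟩, hPpos⟩ := hP
  have hpos (u : Ω) : 0 < (1 - ε) * Q u + ε * P u := by
    nlinarith [hQ.1 u, hPpos u, hε.1, hε.2]
  refine ⟨⟨fun u => (hpos u).le, ?_⟩, hpos⟩
  rw [Finset.sum_add_distrib, ← Finset.mul_sum, ← Finset.mul_sum, hQ.2, hPsum]
  ring

end FullSupport

theorem infCE_fullSupportProbs_eq_iInf_atomOf {Ω : Type*} [Fintype Ω] (𝒢 : MeasurableSpace Ω)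
    (D : Ω → ℝ) (ω : Ω) :
    infCE (fullSupportProbs Ω) 𝒢 D ω = ⨅ ω' : atomOf 𝒢 ω, D (ω' : Ω) := by
  classical
  have : Nonempty Ω := ⟨ω⟩
  obtain ⟨⟨u₀, hu₀⟩, hmin⟩ := exists_eq_ciInf_of_finite (f := fun u : atomOf 𝒢 ω => D u)
  rw [← hmin]
  have hlower (Q) (hQ : Q ∈ fullSupportProbs Ω) : D u₀ ≤ condExpOn Q 𝒢 D ω := by
    refine le_condExpOn 𝒢 D ω hQ.1.1 (hQ.2.sum_indicator_atomOf_pos 𝒢 ω) fun u hu => ?_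
    exact hmin ▸ ciInf_le (Finite.bddBelow_range _) (⟨u, hu⟩ : atomOf 𝒢 ω)
  let Qε (ε : ℝ) : Ω → ℝ := fun u =>
    (1 - ε) * (Pi.single u₀ 1 : Ω → ℝ) u + ε * (Fintype.card Ω : ℝ)⁻¹
  have hQε (ε : ℝ) (hε : ε ∈ Set.Ioc 0 1) : Qε ε ∈ fullSupportProbs Ω :=
    (isProb_pi_single u₀).lineMap_mem_fullSupportProbs uniform_mem_fullSupportProbs hε
  have hlim : Tendsto (fun ε => condExpOn (Qε ε) 𝒢 D ω) (𝓝[>] 0) (𝓝 (D u₀)) := by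
    have hQ0 : Qε 0 = Pi.single u₀ 1 := by ext u; simp [Qε]
    have hcont := continuousAt_condExpOn 𝒢 D ω (Q := Qε 0)
      (by rw [hQ0, sum_indicator_pi_single 𝒢 ω hu₀]; exact one_ne_zero)
    rw [← condExpOn_pi_single 𝒢 D ω hu₀, ← hQ0]
    exact (hcont.comp (by fun_prop : Continuous Qε).continuousAt).tendsto.mono_left
      nhdsWithin_le_nhds
  refine IsGLB.csInf_eq ⟨?_, fun b hb => ge_of_tendsto hlim ?_⟩ ⟨_, _, hQε 1 ⟨one_pos, le_rfl⟩, rfl⟩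
  · rintro _ ⟨Q, hQ, rfl⟩
    exact hlower Q hQ
  · filter_upwards [Ioo_mem_nhdsGT one_pos] with ε hε
    exact hb ⟨_, hQε ε (Set.Ioo_subset_Ioc_self hε), rfl⟩

theorem infCE_fullSupportProbs_general {Ω : Type*} [Fintype Ω]
    (T : ℕ) (F : ℕ → MeasurableSpace Ω) (hF : Monotone F) :
    (∀ (𝒢 : MeasurableSpace Ω) (D : Ω → ℝ) (ω : Ω),
        infCE (fullSupportProbs Ω) 𝒢 D ω = ⨅ ω' : atomOf 𝒢 ω, D (ω' : Ω)) ∧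
    IsConsistent T F (fullSupportProbs Ω) := by
  refine ⟨infCE_fullSupportProbs_eq_iInf_atomOf, fun t _ X ω => ?_⟩
  simp only [infCE_fullSupportProbs_eq_iInf_atomOf]
  exact (iInf_atomOf_iInf_atomOf (hF t.le_succ) X ω).symm

/-- For the set `P^e` of all full-support probability measures,
`inf_{Q∈P^e} E_Q[D | F_t]` equals the pointwise minimum of `D` over the atom
(partition element) containing `ω`; consequently `P^e` is consistent. -/
theorem infCE_fullSupportProbs {Ω : Type*} [Fintype Ω] [Nonempty Ω]
    (T : ℕ) (F : ℕ → MeasurableSpace Ω) (hF : Monotone F) :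
    (∀ (𝒢 : MeasurableSpace Ω) (D : Ω → ℝ) (ω : Ω),
        infCE (fullSupportProbs Ω) 𝒢 D ω = ⨅ ω' : atomOf 𝒢 ω, D (ω' : Ω)) ∧
    IsConsistent T F (fullSupportProbs Ω) :=
  infCE_fullSupportProbs_general T F hF
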